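/- Let X be a subshift over an arbitrary alphabet. Then X satisfies condition (L) if and only if {x} ∉ U for every eventually periodic point x ∈ X. -/

import Mathlib

namespace SubshiftPaper

variable {A : Type*}

/-- The initial word of length `n` of a sequence. -/
def word (x : ℕ → A) (n : ℕ) : List A := List.ofFn (fun i : Fin n => x i)

/-- Concatenation of a finite word with an infinite sequence. -/
def cat (α : List A) (x : ℕ → A) : ℕ → A := fun n =>
  if h : n < α.length then α.get ⟨n, h⟩ else x (n - α.length)

/-- The shift map on infinite sequences. -/
def shiftSeq (x : ℕ → A) : ℕ → A := fun n => x (n + 1)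

/-- `X` is a subshift: the set of sequences avoiding a set `F` of forbidden nonempty
finite words. -/
def IsSubshift (X : Set (ℕ → A)) : Prop :=
  ∃ F : Set (List A), (∀ w ∈ F, w ≠ []) ∧
    X = {x : ℕ → A | ∀ n k : ℕ, word (fun i => x (n + i)) k ∉ F}

/-- The language of `X`: all finite initial blocks of elements of `X` (and their
subblocks appear by shifting; for subshifts initial blocks suffice). -/
def language (X : Set (ℕ → A)) : Set (List A) :=
  {α | ∃ x ∈ X, word x α.length = α}

open Classical in
/-- The product metric `d(x,y) = 2^{-min{n : xₙ ≠ yₙ}}`. -/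
noncomputable def prodDist (x y : ℕ → A) : ℝ :=
  if h : x = y then 0 else (2 : ℝ)⁻¹ ^ Nat.find (Function.ne_iff.mp h)

/-- The cylinder set `Z_α = {x ∈ X : x starts with α}`. -/
def cylinder (X : Set (ℕ → A)) (α : List A) : Set (ℕ → A) :=
  {x ∈ X | word x α.length = α}

/-- The set `C(α,β) = {βx : βx ∈ X and αx ∈ X}`. -/
def Cab (X : Set (ℕ → A)) (α β : List A) : Set (ℕ → A) :=
  {y | ∃ x : ℕ → A, y = cat β x ∧ cat β x ∈ X ∧ cat α x ∈ X}

/-- The follower set `F_α = {x ∈ X : αx ∈ X}`. -/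
def follower (X : Set (ℕ → A)) (α : List A) : Set (ℕ → A) :=
  {x ∈ X | cat α x ∈ X}

/-- The Boolean algebra `U` of subsets of `X` generated by the sets `C(α,β)`: the smallest
collection of subsets containing all `C(α,β)` and `X` and closed under finite unions, finite
intersections and complements in `X`. -/
def BA (X : Set (ℕ → A)) : Set (Set (ℕ → A)) :=
  ⋂₀ {C : Set (Set (ℕ → A)) | X ∈ C ∧
    (∀ α ∈ language X, ∀ β ∈ language X, Cab X α β ∈ C) ∧
    (∀ S ∈ C, ∀ T ∈ C, S ∪ T ∈ C) ∧
    (∀ S ∈ C, ∀ T ∈ C, S ∩ T ∈ C) ∧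
    (∀ S ∈ C, X \ S ∈ C)}

/-- The periodic sequence `γ^∞ = γγγ⋯`. -/
def per (γ : List A) (h : γ ≠ []) : ℕ → A :=
  fun n => γ.get ⟨n % γ.length, Nat.mod_lt n (List.length_pos_iff.mpr h)⟩

/-- A point is eventually periodic if it has the form `αγ^∞`. -/
def EventuallyPeriodic (x : ℕ → A) : Prop :=
  ∃ (α γ : List A) (h : γ ≠ []), x = cat α (per γ h)

/-- Condition (L): for every finite `P ⊆ L_X` and every nonempty `γ ∈ L_X` with
`γ^∞ ∈ F_P := ⋂_{α ∈ P} F_α`, the set `F_P` contains an element other than `γ^∞`. -/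
def ConditionL (X : Set (ℕ → A)) : Prop :=
  ∀ P : Finset (List A), ↑P ⊆ language X →
    ∀ γ ∈ language X, ∀ h : γ ≠ [],
      per γ h ∈ X ∩ ⋂ α ∈ P, follower X α →
        ∃ z ∈ X ∩ ⋂ α ∈ P, follower X α, z ≠ per γ h
/-!
Every set `S ∈ U` is locally stable at a point `x ∈ X`: there are finitely many pairs `(α, b)`
such that, for all large `m`, replacing the tail `σᵐ x` of `x` by any `z` for which each
`α σᵇ(x₀⋯x_{m-1} z)` stays in `X` (whenever `α σᵇ x` is in `X`) does not change membership in `S`.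
This is clear for the generators `C(α,β)` (using that `X` is closed) and survives Boolean
operations. If `x = αγ^∞` and `σᵐ x = γ^∞`, those finitely many constraints say exactly that `z`
lies in a set `F_P` containing `γ^∞`, and condition (L) supplies such a `z ≠ γ^∞`; hence
`{x} ∉ U`. Conversely every `F_P` lies in `U`, so `F_P = {γ^∞}` would put the singleton of the
periodic point `γ^∞` in `U`.
-/

open Filter

section Sequences

lemma word_length (x : ℕ → A) (n : ℕ) : (word x n).length = n := List.length_ofFn

lemma word_getElem (x : ℕ → A) (n i : ℕ) (h : i < (word x n).length) : (word x n)[i] = x i := by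
  simp [word]

lemma word_congr {x y : ℕ → A} {n : ℕ} (h : ∀ i < n, x i = y i) : word x n = word y n :=
  List.ofFn_inj.mpr (funext fun i => h i i.2)

lemma cat_apply_lt (α : List A) (x : ℕ → A) {n : ℕ} (h : n < α.length) : cat α x n = α[n] := by
  simp [cat, h]

lemma cat_apply_ge (α : List A) (x : ℕ → A) {n : ℕ} (h : α.length ≤ n) :
    cat α x n = x (n - α.length) := by
  simp [cat, Nat.not_lt.mpr h]

lemma cat_apply_eq_of_lt (α : List A) (x y : ℕ → A) {n : ℕ} (h : n < α.length) :
    cat α x n = cat α y n := by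
  rw [cat_apply_lt _ _ h, cat_apply_lt _ _ h]

lemma cat_nil (x : ℕ → A) : cat [] x = x := by
  funext n; simp [cat]

lemma cat_append (α β : List A) (x : ℕ → A) : cat (α ++ β) x = cat α (cat β x) := by
  funext n
  rcases lt_or_ge n α.length with h | h
  · rw [cat_apply_lt _ _ (by simp; omega), cat_apply_lt _ _ h, List.getElem_append_left h]
  · rw [cat_apply_ge _ _ h]
    rcases lt_or_ge n (α.length + β.length) with h2 | h2
    · rw [cat_apply_lt _ _ (by simp; omega), cat_apply_lt _ _ (by omega),
        List.getElem_append_right h]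
    · rw [cat_apply_ge _ _ (by simp; omega), cat_apply_ge _ _ (by omega)]
      congr 1; simp; omega

lemma word_cat (β : List A) (x : ℕ → A) : word (cat β x) β.length = β :=
  List.ext_getElem (word_length _ _) fun i h1 h2 => by rw [word_getElem, cat_apply_lt _ _ h2]

lemma shiftSeq_iterate_apply (b : ℕ) (x : ℕ → A) (n : ℕ) : shiftSeq^[b] x n = x (n + b) := by
  induction b generalizing n with
  | zero => rfl
  | succ b ih =>
    rw [Function.iterate_succ_apply', shiftSeq, ih]
    congr 1; omega

lemma shiftSeq_iterate_cat (μ : List A) (x : ℕ → A) {b : ℕ} (h : b ≤ μ.length) :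
    shiftSeq^[b] (cat μ x) = cat (μ.drop b) x := by
  funext n
  rw [shiftSeq_iterate_apply]
  rcases lt_or_ge (n + b) μ.length with h2 | h2
  · rw [cat_apply_lt _ _ h2, cat_apply_lt _ _ (by simp; omega), List.getElem_drop]
    congr 1; omega
  · rw [cat_apply_ge _ _ h2, cat_apply_ge _ _ (by simp; omega)]
    congr 1; simp; omega

lemma shiftSeq_iterate_length_cat (μ : List A) (x : ℕ → A) :
    shiftSeq^[μ.length] (cat μ x) = x := by
  rw [shiftSeq_iterate_cat μ x le_rfl, List.drop_length, cat_nil]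

lemma cat_word_shiftSeq_iterate (x : ℕ → A) (n : ℕ) : cat (word x n) (shiftSeq^[n] x) = x := by
  funext i
  rcases lt_or_ge i n with h | h
  · rw [cat_apply_lt _ _ (by rwa [word_length]), word_getElem]
  · rw [cat_apply_ge _ _ (by rwa [word_length]), shiftSeq_iterate_apply, word_length]
    congr 1; omega

lemma word_per (γ : List A) (h : γ ≠ []) : word (per γ h) γ.length = γ :=
  List.ext_getElem (word_length _ _) fun i _ h2 => by
    rw [word_getElem]
    simp only [per, List.get_eq_getElem, Nat.mod_eq_of_lt h2]

lemma shiftSeq_iterate_mul_per (γ : List A) (h : γ ≠ []) (q : ℕ) :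
    shiftSeq^[γ.length * q] (per γ h) = per γ h := by
  funext n
  simp only [shiftSeq_iterate_apply, per, Nat.add_mul_mod_self_left]

lemma shiftSeq_iterate_cat_per (α γ : List A) (h : γ ≠ []) (q : ℕ) :
    shiftSeq^[α.length + γ.length * q] (cat α (per γ h)) = per γ h := by
  rw [add_comm, Function.iterate_add_apply, shiftSeq_iterate_length_cat,
    shiftSeq_iterate_mul_per]

end Sequences

section Splice

def splice (x : ℕ → A) (m : ℕ) (z : ℕ → A) : ℕ → A := cat (word x m) z

variable {x z : ℕ → A} {m : ℕ}

lemma splice_apply_lt {i : ℕ} (h : i < m) : splice x m z i = x i := by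
  rw [splice, cat_apply_lt _ _ (by rwa [word_length]), word_getElem]

lemma word_splice {n : ℕ} (h : n ≤ m) : word (splice x m z) n = word x n :=
  word_congr fun _ hi => splice_apply_lt (by omega)

lemma shiftSeq_iterate_splice : shiftSeq^[m] (splice x m z) = z := by
  unfold splice
  simpa only [word_length] using shiftSeq_iterate_length_cat (word x m) z

lemma splice_shiftSeq_iterate : splice x m (shiftSeq^[m] x) = x :=
  cat_word_shiftSeq_iterate x m

lemma cat_shiftSeq_iterate_splice (α : List A) {b : ℕ} (hb : b ≤ m) :
    cat α (shiftSeq^[b] (splice x m z)) = cat (α ++ (word x m).drop b) z := by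
  rw [splice, shiftSeq_iterate_cat _ _ (by rwa [word_length]), cat_append]

end Splice

section Subshift

variable {X : Set (ℕ → A)}

lemma IsSubshift.shiftSeq_iterate_mem (hX : IsSubshift X) {x : ℕ → A} (hx : x ∈ X) (b : ℕ) :
    shiftSeq^[b] x ∈ X := by
  obtain ⟨F, -, rfl⟩ := hX
  intro n k
  convert hx (n + b) k using 2
  exact word_congr fun i _ => by rw [shiftSeq_iterate_apply]; congr 1; omega

lemma IsSubshift.exists_not_mem_of_agree (hX : IsSubshift X) {u : ℕ → A} (hu : u ∉ X) :
    ∃ N, ∀ v : ℕ → A, (∀ i < N, v i = u i) → v ∉ X := by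
  obtain ⟨F, -, rfl⟩ := hX
  simp only [Set.mem_ofPred_eq, not_forall, not_not] at hu
  obtain ⟨n, k, hw⟩ := hu
  refine ⟨n + k, fun v hv hvX => hvX n k ?_⟩
  rwa [word_congr fun i hi => hv (n + i) (by omega)]

lemma mem_Cab_iff (α β : List A) (u : ℕ → A) :
    u ∈ Cab X α β ↔ u ∈ X ∧ word u β.length = β ∧ cat α (shiftSeq^[β.length] u) ∈ X := by
  constructor
  · rintro ⟨v, rfl, h1, h2⟩
    exact ⟨h1, word_cat _ _, by rwa [shiftSeq_iterate_length_cat]⟩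
  · rintro ⟨h1, h2, h3⟩
    have hu : cat β (shiftSeq^[β.length] u) = u := by
      conv_rhs => rw [← cat_word_shiftSeq_iterate u β.length, h2]
    exact ⟨_, hu.symm, by rwa [hu], h3⟩

lemma Cab_nil (α : List A) : Cab X α [] = follower X α := by
  ext u
  simp [mem_Cab_iff, follower, word]

lemma nil_mem_language {x : ℕ → A} (hx : x ∈ X) : [] ∈ language X := ⟨x, hx, rfl⟩

end Subshift

section BooleanAlgebra

variable {X : Set (ℕ → A)}

lemma BA_induction {p : Set (ℕ → A) → Prop} (self : p X)
    (Cab : ∀ α ∈ language X, ∀ β ∈ language X, p (Cab X α β))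
    (union : ∀ S T, p S → p T → p (S ∪ T)) (inter : ∀ S T, p S → p T → p (S ∩ T))
    (diff : ∀ S, p S → p (X \ S)) {S : Set (ℕ → A)} (hS : S ∈ BA X) : p S :=
  Set.mem_sInter.mp hS {S | p S}
    ⟨self, Cab, fun S hS T hT => union S T hS hT, fun S hS T hT => inter S T hS hT, diff⟩

lemma self_mem_BA : X ∈ BA X := fun _ hC => hC.1

lemma Cab_mem_BA {α β : List A} (hα : α ∈ language X) (hβ : β ∈ language X) :
    Cab X α β ∈ BA X := fun _ hC => hC.2.1 α hα β hβ

lemma inter_mem_BA {S T : Set (ℕ → A)} (hS : S ∈ BA X) (hT : T ∈ BA X) : S ∩ T ∈ BA X :=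
  fun C hC => hC.2.2.2.1 S (hS C hC) T (hT C hC)

lemma inter_follower_mem_BA (hX : X.Nonempty) (P : Finset (List A)) (hP : ↑P ⊆ language X) :
    X ∩ ⋂ α ∈ P, follower X α ∈ BA X := by
  classical
  induction P using Finset.induction with
  | empty => simpa using self_mem_BA
  | insert a P _ ih =>
    rw [Finset.set_biInter_insert, Set.inter_left_comm, ← Cab_nil]
    obtain ⟨x, hx⟩ := hX
    exact inter_mem_BA (Cab_mem_BA (hP (by simp)) (nil_mem_language hx))
      (ih fun β hβ => hP (by simp [hβ]))

end BooleanAlgebra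

section LocalStability

variable {X : Set (ℕ → A)} {x : ℕ → A}

def Admissible (X : Set (ℕ → A)) (x : ℕ → A) (Q : Finset (List A × ℕ)) (m : ℕ)
    (z : ℕ → A) : Prop :=
  ∀ p ∈ Q, p.2 ≤ m → cat p.1 (shiftSeq^[p.2] x) ∈ X →
    cat p.1 (shiftSeq^[p.2] (splice x m z)) ∈ X

def IsLocallyStable (X : Set (ℕ → A)) (x : ℕ → A) (S : Set (ℕ → A)) : Prop :=
  ∃ Q : Finset (List A × ℕ), ∀ᶠ m in atTop, ∀ z, Admissible X x Q m z → (splice x m z ∈ S ↔ x ∈ S)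

lemma Admissible.mono {Q Q' : Finset (List A × ℕ)} {m : ℕ} {z : ℕ → A} (hQ : Q ⊆ Q')
    (h : Admissible X x Q' m z) : Admissible X x Q m z :=
  fun p hp => h p (hQ hp)

lemma Admissible.splice_mem {Q : Finset (List A × ℕ)} {m : ℕ} {z : ℕ → A}
    (h : Admissible X x Q m z) (hQ : ([], 0) ∈ Q) (hx : x ∈ X) : splice x m z ∈ X := by
  simpa [cat_nil] using h _ hQ m.zero_le (by simpa [cat_nil] using hx)

lemma isLocallyStable_self (hx : x ∈ X) : IsLocallyStable X x X :=
  ⟨{([], 0)}, Eventually.of_forall fun _ _ hz =>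
    iff_of_true (hz.splice_mem (Finset.mem_singleton_self _) hx) hx⟩

lemma IsLocallyStable.union {S T : Set (ℕ → A)} (hS : IsLocallyStable X x S)
    (hT : IsLocallyStable X x T) : IsLocallyStable X x (S ∪ T) := by
  classical
  obtain ⟨Q, hQ⟩ := hS
  obtain ⟨R, hR⟩ := hT
  refine ⟨Q ∪ R, (hQ.and hR).mono fun m ⟨hm, hm'⟩ z hz => ?_⟩
  exact or_congr (hm z (hz.mono Finset.subset_union_left))
    (hm' z (hz.mono Finset.subset_union_right))

lemma IsLocallyStable.inter {S T : Set (ℕ → A)} (hS : IsLocallyStable X x S)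
    (hT : IsLocallyStable X x T) : IsLocallyStable X x (S ∩ T) := by
  classical
  obtain ⟨Q, hQ⟩ := hS
  obtain ⟨R, hR⟩ := hT
  refine ⟨Q ∪ R, (hQ.and hR).mono fun m ⟨hm, hm'⟩ z hz => ?_⟩
  exact and_congr (hm z (hz.mono Finset.subset_union_left))
    (hm' z (hz.mono Finset.subset_union_right))

lemma IsLocallyStable.diff (hx : x ∈ X) {S : Set (ℕ → A)} (hS : IsLocallyStable X x S) :
    IsLocallyStable X x (X \ S) := by
  classical
  obtain ⟨Q, hQ⟩ := hS
  refine ⟨insert ([], 0) Q, hQ.mono fun m hm z hz => ?_⟩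
  exact and_congr (iff_of_true (hz.splice_mem (Finset.mem_insert_self _ _) hx) hx)
    (not_congr (hm z (hz.mono (Finset.subset_insert _ _))))

lemma isLocallyStable_Cab (hX : IsSubshift X) (hx : x ∈ X) (α β : List A) :
    IsLocallyStable X x (Cab X α β) := by
  classical
  by_cases hβ : word x β.length = β
  swap
  · refine ⟨∅, eventually_ge_atTop β.length |>.mono fun m hm z _ => ?_⟩
    simp only [mem_Cab_iff, word_splice hm, hβ, false_and, and_false]
  by_cases hα : cat α (shiftSeq^[β.length] x) ∈ X
  · refine ⟨{([], 0), (α, β.length)}, eventually_ge_atTop β.length |>.mono fun m hm z hz => ?_⟩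
    rw [mem_Cab_iff, mem_Cab_iff, word_splice hm]
    exact iff_of_true ⟨hz.splice_mem (by simp) hx, hβ, hz (α, β.length) (by simp) hm hα⟩ ⟨hx, hβ, hα⟩
  · obtain ⟨N, hN⟩ := hX.exists_not_mem_of_agree hα
    refine ⟨∅, eventually_ge_atTop (β.length + N) |>.mono fun m hm z _ => ?_⟩
    simp only [mem_Cab_iff, hα, and_false, iff_false, not_and]
    intro _ _
    refine hN _ fun i hi => ?_
    -- both sides are `cat (α ++ (word x m).drop β.length) _`, and that word has length `≥ N`
    conv_rhs => rw [← splice_shiftSeq_iterate (x := x) (m := m)]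
    rw [cat_shiftSeq_iterate_splice _ (by omega), cat_shiftSeq_iterate_splice _ (by omega)]
    exact cat_apply_eq_of_lt _ _ _ (by simp [word_length]; omega)

lemma isLocallyStable_of_mem_BA (hX : IsSubshift X) (hx : x ∈ X) {S : Set (ℕ → A)}
    (hS : S ∈ BA X) : IsLocallyStable X x S :=
  BA_induction (isLocallyStable_self hx) (fun α _ β _ => isLocallyStable_Cab hX hx α β)
    (fun _ _ => IsLocallyStable.union) (fun _ _ => IsLocallyStable.inter)
    (fun _ => IsLocallyStable.diff hx) hS

end LocalStability

section ConditionL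

variable {X : Set (ℕ → A)} {x : ℕ → A}

/-- The constraints of `Admissible X x Q m` are membership of `z` in the follower sets of the
words `α ++ x_b ⋯ x_{m-1}`, which condition (L) lets us meet with `z ≠ σᵐ x = γ^∞`. -/
lemma exists_admissible_splice_ne (hL : ConditionL X) {γ : List A} {hγ : γ ≠ []}
    (hper : per γ hγ ∈ X) {m : ℕ} (hm : shiftSeq^[m] x = per γ hγ) (Q : Finset (List A × ℕ)) :
    ∃ z, Admissible X x Q m z ∧ splice x m z ≠ x := by
  classical
  have hcat : ∀ α b, b ≤ m →
      cat α (shiftSeq^[b] x) = cat (α ++ (word x m).drop b) (per γ hγ) := fun α b hb => by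
    rw [← hm, ← cat_shiftSeq_iterate_splice α hb, splice_shiftSeq_iterate]
  let P : Finset (List A) := ((Q.filter (·.2 ≤ m)).image fun p => p.1 ++ (word x m).drop p.2)
    |>.filter fun π => cat π (per γ hγ) ∈ X
  have hP : ∀ π ∈ P, cat π (per γ hγ) ∈ X := fun π hπ => (Finset.mem_filter.mp hπ).2
  obtain ⟨z, ⟨-, hzP⟩, hz⟩ := hL P (fun π hπ => ⟨_, hP π hπ, word_cat _ _⟩) γ
    ⟨_, hper, word_per γ hγ⟩ hγ ⟨hper, Set.mem_iInter₂.mpr fun π hπ => ⟨hper, hP π hπ⟩⟩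
  refine ⟨z, fun p hp hpm hpX => ?_, fun h => hz ?_⟩
  · rw [cat_shiftSeq_iterate_splice _ hpm]
    rw [hcat _ _ hpm] at hpX
    refine (Set.mem_iInter₂.mp hzP _ ?_).2
    exact Finset.mem_filter.mpr ⟨Finset.mem_image.mpr ⟨p, by simp [hp, hpm]⟩, hpX⟩
  · rw [← hm, ← h, shiftSeq_iterate_splice]

lemma frequently_exists_admissible_splice_ne (hX : IsSubshift X) (hL : ConditionL X)
    (hx : x ∈ X) (hep : EventuallyPeriodic x) (Q : Finset (List A × ℕ)) :
    ∃ᶠ m in atTop, ∃ z, Admissible X x Q m z ∧ splice x m z ≠ x := by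
  obtain ⟨α, γ, hγ, rfl⟩ := hep
  have hm : ∀ q, shiftSeq^[α.length + γ.length * q] (cat α (per γ hγ)) = per γ hγ :=
    shiftSeq_iterate_cat_per α γ hγ
  have hper : per γ hγ ∈ X := hm 0 ▸ hX.shiftSeq_iterate_mem hx _
  refine frequently_atTop.mpr fun M => ⟨α.length + γ.length * M, ?_,
    exists_admissible_splice_ne hL hper (hm M) Q⟩
  nlinarith [List.length_pos_iff.mpr hγ]

end ConditionL

/-- a subshift `X` satisfies condition (L) if and only if `{x} ∉ U` for every
eventually periodic point `x ∈ X`. -/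
theorem stmt4 {A : Type*} (X : Set (ℕ → A)) (hX : IsSubshift X) :
    ConditionL X ↔ ∀ x ∈ X, EventuallyPeriodic x → {x} ∉ BA X := by
  constructor
  · intro hL x hx hep hS
    obtain ⟨Q, hQ⟩ := isLocallyStable_of_mem_BA hX hx hS
    obtain ⟨m, hm, z, hz, hne⟩ :=
      (hQ.and_frequently (frequently_exists_admissible_splice_ne hX hL hx hep Q)).exists
    exact hne ((hm z hz).mpr rfl)
  · intro hsingleton P hP γ _ hγ hper
    by_contra! hunique
    have hFP : X ∩ ⋂ α ∈ P, follower X α = {per γ hγ} :=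
      Set.eq_singleton_iff_unique_mem.mpr ⟨hper, hunique⟩
    have hmem := inter_follower_mem_BA ⟨_, hper.1⟩ P hP
    rw [hFP] at hmem
    exact hsingleton _ hper.1 ⟨[], γ, hγ, (cat_nil _).symm⟩ hmem

end SubshiftPaper
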